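/- A linear map $T:V\to\mathfrak{L}$ is a relative Rota-Baxter operator on a Leibniz triple system $\mathfrak{L}$ with respect to a representation $(r,m,l)$ on $V$ if and only if its graph $Gr(T)=\{Tu+u \mid u\in V\}$ is a subalgebra of the semidirect product Leibniz triple system $\mathfrak{L}\oplus V$. -/

import Mathlib

def IsTrilin (K : Type*) [Field K] {L M : Type*} [AddCommGroup L] [Module K L]
    [AddCommGroup M] [Module K M] (t : L → L → L → M) : Prop :=
  (∀ y z, IsLinearMap K fun x => t x y z) ∧ (∀ x z, IsLinearMap K fun y => t x y z) ∧
    (∀ x y, IsLinearMap K fun z => t x y z)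

def LTSIdent {L : Type*} [AddCommGroup L] (t : L → L → L → L) : Prop :=
  (∀ a b c d e, t a b (t c d e) =
      t (t a b c) d e - t (t a b d) c e - t (t a b e) c d + t (t a b e) d c) ∧
  (∀ a b c d e, t a (t b c d) e =
      t (t a b c) d e - t (t a c b) d e - t (t a d b) c e + t (t a d c) b e)

def IsLTS (K : Type*) [Field K] {L : Type*} [AddCommGroup L] [Module K L]
    (t : L → L → L → L) : Prop := IsTrilin K t ∧ LTSIdent t

def sd {L V : Type*} [AddCommGroup L] [AddCommGroup V]
    (t : L → L → L → L) (l m r : L → L → V → V) :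
    L × V → L × V → L × V → L × V :=
  fun p q s => (t p.1 q.1 s.1, l p.1 q.1 s.2 + m p.1 s.1 q.2 + r q.1 s.1 p.2)

def IsRep (K : Type*) [Field K] {L V : Type*} [AddCommGroup L] [Module K L]
    [AddCommGroup V] [Module K V] (t : L → L → L → L) (l m r : L → L → V → V) : Prop :=
  IsLTS K (sd t l m r)

def IsRRB {K : Type*} [Field K] {L V : Type*} [AddCommGroup L] [Module K L]
    [AddCommGroup V] [Module K V] (t : L → L → L → L) (l m r : L → L → V → V)
    (T : V →ₗ[K] L) : Prop :=
  ∀ u v w, t (T u) (T v) (T w) =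
    T (l (T u) (T v) w + m (T u) (T w) v + r (T v) (T w) u)

def IsRB {K : Type*} [Field K] {L : Type*} [AddCommGroup L] [Module K L]
    (t : L → L → L → L) (R : L →ₗ[K] L) : Prop :=
  ∀ x y z, t (R x) (R y) (R z) =
    R (t (R x) (R y) z + t (R x) y (R z) + t x (R y) (R z))

def IsNij {K : Type*} [Field K] {A : Type*} [AddCommGroup A] [Module K A]
    (t : A → A → A → A) (N : A →ₗ[K] A) : Prop :=
  ∀ x y z, t (N x) (N y) (N z) =
    N (t (N x) (N y) z) + N (t x (N y) (N z)) + N (t (N x) y (N z))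
      - N (N (t (N x) y z)) - N (N (t x (N y) z)) - N (N (t x y (N z)))
      + N (N (N (t x y z)))

theorem mem_setOf_graph_iff {L V : Type*} {T : V → L} {x : L × V} :
    x ∈ {p : L × V | ∃ u : V, p = (T u, u)} ↔ x.1 = T x.2 := by
  constructor
  · rintro ⟨u, rfl⟩
    rfl
  · intro h
    exact ⟨x.2, Prod.ext h rfl⟩

theorem stmt4 {K : Type*} [Field K] {L V : Type*} [AddCommGroup L] [Module K L]
    [AddCommGroup V] [Module K V]
    (t : L → L → L → L) (l m r : L → L → V → V)
    (T : V →ₗ[K] L) :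
    IsRRB t l m r T ↔
      (∀ p q s : L × V, p ∈ {p : L × V | ∃ u : V, p = (T u, u)} →
        q ∈ {p : L × V | ∃ u : V, p = (T u, u)} →
        s ∈ {p : L × V | ∃ u : V, p = (T u, u)} →
        sd t l m r p q s ∈ {p : L × V | ∃ u : V, p = (T u, u)}) := by
  -- The bracket of `(T u, u)`, `(T v, v)`, `(T w, w)` unfolds to the pair of both sides of the
  -- Rota-Baxter identity for `u v w`, so membership in the graph is that identity.
  constructor
  · rintro hT _ _ _ ⟨u, rfl⟩ ⟨v, rfl⟩ ⟨w, rfl⟩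
    exact mem_setOf_graph_iff.2 (hT u v w)
  · intro hGr u v w
    exact mem_setOf_graph_iff.1 (hGr _ _ _ ⟨u, rfl⟩ ⟨v, rfl⟩ ⟨w, rfl⟩)
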